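/- Let w̃ ∈ W̃ and let A, A' be distinct Weyl chambers having a common face H_A = H_{A'} contained in a hyperplane H ∈ 𝔥. Define f_{w̃}: V → ℝ by f_{w̃}(v) = ‖w̃(v) − v‖². Let h be a point of the common face H_A and let v ∈ H^⊥ be such that h − εv ∈ A for all sufficiently small ε > 0. If ℓ(w̃_{A'}) = ℓ(w̃_A) + 2, then the directional derivative D_v f_{w̃}(h) = lim_{t→0} (f_{w̃}(h + tv) − f_{w̃}(h))/t is strictly positive. -/

import Mathlib

open SemidirectProduct Set

section

variable {B W : Type*} [Group W]

/-- The extended group `W̃ = ⟨δ⟩ ⋉ W`. -/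
abbrev Wtilde (δ : MulAut W) := W ⋊[(Subgroup.zpowers δ).subtype] ↥(Subgroup.zpowers δ)

variable {M : CoxeterMatrix B} {δ : MulAut W} (cs : CoxeterSystem M W)

/-- The length function on `W̃`, extended from `W` by `ℓ(δ^i w) = ℓ(w)`. -/
noncomputable def tlen (x : Wtilde δ) : ℕ :=
  cs.length (((x.right : MulAut W))⁻¹ x.left)

/-- One step of conjugation by a simple reflection: `w̃ →_s w̃'`. -/
def cstep (x y : Wtilde δ) : Prop :=
  ∃ i : B, y = inl (cs.simple i) * x * inl (cs.simple i) ∧ tlen cs y ≤ tlen cs x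

variable {V : Type*} [NormedAddCommGroup V] [InnerProductSpace ℝ V] [FiniteDimensional ℝ V]
variable (ρ : Wtilde δ →* (V ≃ₗᵢ[ℝ] V))

/-- The set `𝔥` of hyperplanes of `V` whose orthogonal reflection is realized by an
element of `W`. -/
noncomputable def mirrors : Set (Submodule ℝ V) :=
  {H | Module.finrank ℝ H + 1 = Module.finrank ℝ V ∧
    ∃ w : W, ρ (inl w) = H.reflection}

/-- The complement of the union of all the reflecting hyperplanes. -/
def chamberDom : Set V := {v | ∀ H ∈ mirrors ρ, v ∉ H}

/-- A Weyl chamber: a connected component of the complement of the mirrors. -/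
def IsChamber (A : Set V) : Prop :=
  ∃ v ∈ chamberDom ρ, A = connectedComponentIn (chamberDom ρ) v

/-- The hyperplane `H` separates `a` and `b`: the segment from `a` to `b` meets `H`. -/
def SepPts (H : Submodule ℝ V) (a b : V) : Prop := ∃ x ∈ segment ℝ a b, x ∈ H

/-- The set `𝔥(A, A')` of reflecting hyperplanes separating `A` and `A'`. -/
noncomputable def sepSet (A A' : Set V) : Set (Submodule ℝ V) :=
  {H | H ∈ mirrors ρ ∧ ∀ a ∈ A, ∀ b ∈ A', SepPts H a b}

/-- `v` is a regular point of the convex set `K`: every reflecting hyperplane through `v`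
contains `K`. -/
def IsRegPt (K : Set V) (v : V) : Prop :=
  v ∈ K ∧ ∀ H ∈ mirrors ρ, v ∈ H → K ⊆ (H : Set V)

/-- The submodule `V^W` of `W`-fixed points. -/
def fixedW : Submodule ℝ V where
  carrier := {v | ∀ w : W, ρ (inl w) v = v}
  add_mem' := by
    intro a b ha hb w
    simp only [map_add, ha w, hb w]
  zero_mem' := by
    intro w
    simp
  smul_mem' := by
    intro c a ha w
    simp only [map_smul, ha w]

/-- The "eigenspace" `V^θ_{w̃} = {v | w̃ v + w̃⁻¹ v = 2 cos θ · v}`. -/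
def eigSp (x : Wtilde δ) (θ : ℝ) : Submodule ℝ V where
  carrier := {v | ρ x v + ρ x⁻¹ v = (2 * Real.cos θ) • v}
  add_mem' := by
    intro a b ha hb
    simp only [Set.mem_setOf_eq, map_add] at *
    rw [smul_add, ← ha, ← hb]
    abel
  zero_mem' := by simp
  smul_mem' := by
    intro c a ha
    simp only [Set.mem_setOf_eq, map_smul] at *
    rw [← smul_add, ha, smul_comm]

/-- `V_{w̃} = V^{θ₀}_{w̃} ∩ (V^W)^⊥`. -/
noncomputable def Vmin (x : Wtilde δ) (θ₀ : ℝ) : Submodule ℝ V :=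
  eigSp ρ x θ₀ ⊓ (fixedW ρ)ᗮ

/-- The complement of the union of the mirrors containing `K`
(whose connected components house the chambers adapted to `K`). -/
def chamberDomK (K : Set V) : Set V :=
  {v | ∀ H ∈ mirrors ρ, K ⊆ (H : Set V) → v ∉ H}

/-- The face of (the chamber) `A` in the hyperplane `H`: the interior, in `H`, of `H ∩ Ā`. -/
def faceIn (H : Submodule ℝ V) (A : Set V) : Set V :=
  Subtype.val '' (interior {h : H | (h : V) ∈ closure A})

/-- The subgroup `W_K` of `W` generated by the reflections in the mirrors containing `K`. -/
noncomputable def WKsub (K : Set V) : Subgroup W :=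
  Subgroup.closure {w : W | ∃ H ∈ mirrors ρ, K ⊆ (H : Set V) ∧ ρ (inl w) = H.reflection}

end


/-! Write `e = ρ x`. The point `h` lies on no mirror but `H`, and `e h` on no mirror but `e H`.
A mirror separating `A'` from `e A'` other than `H` and `e H` therefore misses `h` and `e h`;
as every chamber lies strictly on one side of a mirror and `h`, `e h` are in the closures of
`A, A'` and of `e A, e A'`, the mirror also separates `A` from `e A`. Thus
`𝔥(A', e A') ⊆ {H, e H} ∪ 𝔥(A, e A)`, and `ℓ(w̃_{A'}) = ℓ(w̃_A) + 2` forces `H ≠ e H`, neither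
of which separates `A` from `e A`. So `e h` lies on the side of `H` containing `A`, and `h` on
the side of `e H` containing `e A`: `⟪v, e h⟫ < 0` and `⟪e v, h⟫ < 0`. Since `⟪h, v⟫ = 0`, the
derivative `2 ⟪e h - h, e v - v⟫ = -2 (⟪v, e h⟫ + ⟪e v, h⟫)` is positive. -/

open Module

theorem IsPreconnected.mul_nonneg_of_mem_closure {X : Type*} [TopologicalSpace X] {s : Set X}
    (hs : IsPreconnected s) {f : X → ℝ} (hf : Continuous f) (hs0 : ∀ u ∈ s, f u ≠ 0) {p q : X}
    (hp : p ∈ closure s) (hq : q ∈ closure s) : 0 ≤ f p * f q := by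
  have key : ∀ p q, p ∈ closure s → q ∈ closure s → f p < 0 → 0 < f q → False := by
    intro p q hp hq hfp hfq
    obtain ⟨u, -, hu⟩ := hs _ _ (isOpen_lt hf continuous_const) (isOpen_lt continuous_const hf)
      (fun u hu => lt_or_gt_of_ne (hs0 u hu))
      ((mem_closure_iff.1 hp _ (isOpen_lt hf continuous_const) hfp).mono fun _ => And.symm)
      ((mem_closure_iff.1 hq _ (isOpen_lt continuous_const hf) hfq).mono fun _ => And.symm)
    have hneg : f u < 0 := hu.1
    have hpos : 0 < f u := hu.2
    exact lt_asymm hneg hpos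
  by_contra! hneg
  rcases mul_neg_iff.1 hneg with ⟨hfp, hfq⟩ | ⟨hfp, hfq⟩
  · exact key q p hq hp hfq hfp
  · exact key p q hp hq hfp hfq

theorem IsPreconnected.mul_pos_of_mem_closure {X : Type*} [TopologicalSpace X] {s : Set X}
    (hs : IsPreconnected s) {f : X → ℝ} (hf : Continuous f) (hs0 : ∀ u ∈ s, f u ≠ 0) {p a : X}
    (hp : p ∈ closure s) (hp0 : f p ≠ 0) (ha : a ∈ s) : 0 < f p * f a :=
  (hs.mul_nonneg_of_mem_closure hf hs0 hp (subset_closure ha)).lt_of_ne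
    (mul_ne_zero hp0 (hs0 a ha)).symm

theorem Set.notMem_insert_insert_of_ncard_eq {α : Type*} {s t : Set α} {a b : α}
    (hs : s.Finite) (hts : t ⊆ insert a (insert b s)) (hcard : t.ncard = s.ncard + 2) :
    a ∉ insert b s ∧ b ∉ s := by
  have hle := Set.ncard_le_ncard hts ((hs.insert b).insert a)
  constructor
  · intro ha
    rw [Set.ncard_insert_of_mem ha] at hle
    have := Set.ncard_insert_le b s
    omega
  · intro hb
    rw [Set.insert_eq_of_mem hb] at hle
    have := Set.ncard_insert_le a s
    omega

section InnerProductSpace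

variable {𝕜 V : Type*} [RCLike 𝕜] [NormedAddCommGroup V] [InnerProductSpace 𝕜 V]
  [FiniteDimensional 𝕜 V]

theorem Submodule.eq_orthogonal_span_singleton {K : Submodule 𝕜 V}
    (hK : finrank 𝕜 K + 1 = finrank 𝕜 V) {n : V} (hn : n ∈ Kᗮ) (hn0 : n ≠ 0) :
    K = (𝕜 ∙ n)ᗮ := by
  have hspan : 𝕜 ∙ n = Kᗮ := by
    refine Submodule.eq_of_le_of_finrank_eq ((Submodule.span_singleton_le_iff_mem n _).2 hn) ?_
    have := K.finrank_add_finrank_orthogonal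
    rw [finrank_span_singleton hn0]
    omega
  rw [hspan, Submodule.orthogonal_orthogonal]

theorem Submodule.exists_eq_orthogonal_span_singleton {K : Submodule 𝕜 V}
    (hK : finrank 𝕜 K + 1 = finrank 𝕜 V) : ∃ n : V, n ≠ 0 ∧ K = (𝕜 ∙ n)ᗮ := by
  obtain ⟨n, hn, hn0⟩ := Kᗮ.exists_mem_ne_zero_of_ne_bot fun hbot => by
    have := K.finrank_add_finrank_orthogonal
    rw [hbot, finrank_bot] at this
    omega
  exact ⟨n, hn0, eq_orthogonal_span_singleton hK hn hn0⟩

theorem Submodule.eq_of_reflection_eq {K K' : Submodule 𝕜 V}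
    (h : K.reflection = K'.reflection) : K = K' := by
  ext u
  rw [← reflection_eq_self_iff, h, reflection_eq_self_iff]

end InnerProductSpace

section RealInnerProductSpace

variable {V : Type*} [NormedAddCommGroup V] [InnerProductSpace ℝ V]

theorem SepPts.symm {K : Submodule ℝ V} {a b : V} (h : SepPts K a b) : SepPts K b a :=
  let ⟨p, hp, hpK⟩ := h
  ⟨p, segment_symm ℝ a b ▸ hp, hpK⟩

theorem sepPts_orthogonal_span_singleton_iff {n a b : V} :
    SepPts (ℝ ∙ n)ᗮ a b ↔ inner ℝ n a * inner ℝ n b ≤ 0 := by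
  have himage : (fun u => inner ℝ n u) '' segment ℝ a b = uIcc (inner ℝ n a) (inner ℝ n b) := by
    rw [← segment_eq_uIcc]
    exact image_segment ℝ (innerₛₗ ℝ n).toAffineMap a b
  simp only [SepPts, Submodule.mem_orthogonal_singleton_iff_inner_right]
  change (0 : ℝ) ∈ (fun u => inner ℝ n u) '' segment ℝ a b ↔ _
  rw [himage, mem_uIcc, mul_nonpos_iff]
  tauto

theorem forall_sepPts_orthogonal_span_singleton_iff {n p q : V} {s t : Set V}
    (hs : IsPreconnected s) (ht : IsPreconnected t)
    (hs0 : ∀ u ∈ s, inner ℝ n u ≠ 0) (ht0 : ∀ u ∈ t, inner ℝ n u ≠ 0)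
    (hp : p ∈ closure s) (hq : q ∈ closure t) (hp0 : inner ℝ n p ≠ 0) (hq0 : inner ℝ n q ≠ 0) :
    (∀ a ∈ s, ∀ b ∈ t, SepPts (ℝ ∙ n)ᗮ a b) ↔ inner ℝ n p * inner ℝ n q < 0 := by
  have hf : Continuous fun u : V => inner ℝ n u := continuous_const.inner continuous_id
  simp only [sepPts_orthogonal_span_singleton_iff]
  constructor
  · intro hsep
    obtain ⟨a, ha⟩ := closure_nonempty_iff.1 ⟨p, hp⟩
    obtain ⟨b, hb⟩ := closure_nonempty_iff.1 ⟨q, hq⟩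
    have := mul_pos (hs.mul_pos_of_mem_closure hf hs0 hp hp0 ha)
      (ht.mul_pos_of_mem_closure hf ht0 hq hq0 hb)
    nlinarith [hsep a ha b hb]
  · intro hpq a ha b hb
    have := mul_pos (hs.mul_pos_of_mem_closure hf hs0 hp hp0 ha)
      (ht.mul_pos_of_mem_closure hf ht0 hq hq0 hb)
    nlinarith

theorem LinearIsometryEquiv.map_orthogonal_span_singleton (e : V ≃ₗᵢ[ℝ] V) (n : V) :
    (ℝ ∙ n)ᗮ.map (e.toLinearEquiv : V →ₗ[ℝ] V) = (ℝ ∙ e n)ᗮ := by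
  rw [Submodule.map_orthogonal_equiv, Submodule.map_span, image_singleton]
  rfl

theorem faceIn_subset_inter_closure {H : Submodule ℝ V} {A : Set V} :
    faceIn H A ⊆ (H : Set V) ∩ closure A := by
  rintro _ ⟨p, hp, rfl⟩
  have hpA : p ∈ {q : H | (q : V) ∈ closure A} := interior_subset hp
  exact ⟨p.2, hpA⟩

theorem exists_pos_add_sub_smul_mem_closure_of_mem_faceIn {H : Submodule ℝ V} {A : Set V}
    {h z : V} (hh : h ∈ faceIn H A) (hz : z ∈ H) :
    ∃ t > (0 : ℝ), h + t • z ∈ closure A ∧ h - t • z ∈ closure A := by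
  obtain ⟨p, hp, rfl⟩ := hh
  lift z to H using hz
  have hline : Continuous fun t : ℝ => p + t • z := by fun_prop
  obtain ⟨ε, hε, hball⟩ := Metric.mem_nhds_iff.1 <|
    ((isOpen_interior (s := {q : H | (q : V) ∈ closure A})).preimage hline).mem_nhds (x := 0)
      (by simpa using hp)
  have hmem : ∀ t : ℝ, |t| < ε → (p : V) + t • (z : V) ∈ closure A := fun t ht => by
    simpa using interior_subset (hball (by simpa [Real.dist_eq] using ht))
  refine ⟨ε / 2, by positivity, hmem _ ?_, ?_⟩
  · rw [abs_of_pos (by positivity)]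
    linarith
  · rw [sub_eq_add_neg, ← neg_smul]
    exact hmem _ (by rw [abs_neg, abs_of_pos (by positivity)]; linarith)

end RealInnerProductSpace

section Chambers

variable {W : Type*} [Group W] {δ : MulAut W}
  {V : Type*} [NormedAddCommGroup V] [InnerProductSpace ℝ V] [FiniteDimensional ℝ V]
  (ρ : Wtilde δ →* (V ≃ₗᵢ[ℝ] V))

theorem map_mem_mirrors {K : Submodule ℝ V} (hK : K ∈ mirrors ρ) (y : Wtilde δ) :
    K.map ((ρ y).toLinearEquiv : V →ₗ[ℝ] V) ∈ mirrors ρ := by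
  obtain ⟨hrank, w, hw⟩ := hK
  have hconj : y * inl w * y⁻¹ ∈ (inl : W →* Wtilde δ).range := by
    rw [range_inl_eq_ker_rightHom, MonoidHom.mem_ker]
    simp
  obtain ⟨w', hw'⟩ := hconj
  refine ⟨by rwa [LinearEquiv.finrank_map_eq], w', ?_⟩
  rw [Submodule.reflection_map, hw', map_mul, map_mul, hw, map_inv]
  rfl

theorem comap_mem_mirrors {K : Submodule ℝ V} (hK : K ∈ mirrors ρ) (y : Wtilde δ) :
    K.comap ((ρ y).toLinearEquiv : V →ₗ[ℝ] V) ∈ mirrors ρ := by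
  have hsymm : (ρ y).toLinearEquiv.symm = (ρ y⁻¹).toLinearEquiv := by
    ext u
    simp
  rw [Submodule.comap_equiv_eq_map_symm, hsymm]
  exact map_mem_mirrors ρ hK y⁻¹

theorem mirrors_finite [Finite W] : (mirrors ρ).Finite :=
  ((Set.finite_range fun w : W => ρ (inl w)).preimage
    fun _ _ _ _ h => Submodule.eq_of_reflection_eq h).subset fun _ ⟨_, w, hw⟩ => ⟨w, hw⟩

theorem eq_of_le_of_mem_mirrors {K K' : Submodule ℝ V} (hK : K ∈ mirrors ρ)
    (hK' : K' ∈ mirrors ρ) (hle : K ≤ K') : K = K' :=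
  Submodule.eq_of_le_of_finrank_eq hle (by have := hK.1; have := hK'.1; omega)

theorem mapsTo_chamberDom (y : Wtilde δ) : MapsTo (ρ y) (chamberDom ρ) (chamberDom ρ) :=
  fun _ hu _ hK hyu => hu _ (comap_mem_mirrors ρ hK y) hyu

theorem image_chamberDom (y : Wtilde δ) : ρ y '' chamberDom ρ = chamberDom ρ := by
  refine (mapsTo_chamberDom ρ y).image_subset.antisymm fun u hu => ⟨ρ y⁻¹ u, ?_, by simp⟩
  exact mapsTo_chamberDom ρ y⁻¹ hu

variable {ρ}

theorem IsChamber.isPreconnected {A : Set V} (hA : IsChamber ρ A) : IsPreconnected A := by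
  obtain ⟨v, -, rfl⟩ := hA
  exact isPreconnected_connectedComponentIn

theorem IsChamber.subset_chamberDom {A : Set V} (hA : IsChamber ρ A) : A ⊆ chamberDom ρ := by
  obtain ⟨v, -, rfl⟩ := hA
  exact connectedComponentIn_subset _ _

theorem IsChamber.image {A : Set V} (hA : IsChamber ρ A) (y : Wtilde δ) :
    IsChamber ρ (ρ y '' A) := by
  obtain ⟨v, hv, rfl⟩ := hA
  refine ⟨ρ y v, mapsTo_chamberDom ρ y hv, ?_⟩
  have := (ρ y).toHomeomorph.image_connectedComponentIn hv
  rwa [LinearIsometryEquiv.coe_toHomeomorph, image_chamberDom] at this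

theorem IsChamber.inner_ne_zero {A : Set V} (hA : IsChamber ρ A) {n u : V}
    (hn : (ℝ ∙ n)ᗮ ∈ mirrors ρ) (hu : u ∈ A) : inner ℝ n u ≠ 0 := fun h0 =>
  hA.subset_chamberDom hu _ hn (Submodule.mem_orthogonal_singleton_iff_inner_right.2 h0)

theorem sepSet_comm (A B : Set V) : sepSet ρ A B = sepSet ρ B A := by
  ext K
  exact and_congr_right fun _ => ⟨fun h b hb a ha => (h a ha b hb).symm,
    fun h a ha b hb => (h b hb a ha).symm⟩

theorem mem_sepSet_iff_mul_inner_neg {A B : Set V} (hA : IsChamber ρ A) (hB : IsChamber ρ B)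
    {n p q : V} (hn : (ℝ ∙ n)ᗮ ∈ mirrors ρ) (hp : p ∈ closure A) (hq : q ∈ closure B)
    (hpn : p ∉ (ℝ ∙ n)ᗮ) (hqn : q ∉ (ℝ ∙ n)ᗮ) :
    (ℝ ∙ n)ᗮ ∈ sepSet ρ A B ↔ inner ℝ n p * inner ℝ n q < 0 := by
  rw [Submodule.mem_orthogonal_singleton_iff_inner_right] at hpn hqn
  exact (and_iff_right hn).trans <| forall_sepPts_orthogonal_span_singleton_iff
    hA.isPreconnected hB.isPreconnected (fun _ => hA.inner_ne_zero hn)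
    (fun _ => hB.inner_ne_zero hn) hp hq hpn hqn

theorem mem_sepSet_of_mem_sepSet {A A' B B' : Set V} (hA : IsChamber ρ A)
    (hA' : IsChamber ρ A') (hB : IsChamber ρ B) (hB' : IsChamber ρ B') {p q : V}
    (hpA : p ∈ closure A) (hpA' : p ∈ closure A') (hqB : q ∈ closure B) (hqB' : q ∈ closure B')
    {K : Submodule ℝ V} (hK : K ∈ sepSet ρ A' B') (hpK : p ∉ K) (hqK : q ∉ K) :
    K ∈ sepSet ρ A B := by
  obtain ⟨n, -, rfl⟩ := Submodule.exists_eq_orthogonal_span_singleton hK.1.1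
  rwa [mem_sepSet_iff_mul_inner_neg hA hB hK.1 hpA hqB hpK hqK,
    ← mem_sepSet_iff_mul_inner_neg hA' hB' hK.1 hpA' hqB' hpK hqK]

theorem IsRegPt.notMem {H K : Submodule ℝ V} {u : V} (hu : IsRegPt ρ H u) (hH : H ∈ mirrors ρ)
    (hK : K ∈ mirrors ρ) (hKH : K ≠ H) : u ∉ K := fun huK =>
  hKH (eq_of_le_of_mem_mirrors ρ hH hK (hu.2 K hK huK)).symm

theorem IsRegPt.map {H : Submodule ℝ V} {u : V} (hu : IsRegPt ρ H u) (y : Wtilde δ) :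
    IsRegPt ρ (H.map ((ρ y).toLinearEquiv : V →ₗ[ℝ] V)) (ρ y u) := by
  refine ⟨Submodule.mem_map_of_mem hu.1, fun _ hK hyu => ?_⟩
  rw [Submodule.map_coe, image_subset_iff]
  exact hu.2 _ (comap_mem_mirrors ρ hK y) hyu

theorem IsChamber.isRegPt_of_mem_faceIn {A : Set V} (hA : IsChamber ρ A) {H : Submodule ℝ V}
    {h : V} (hh : h ∈ faceIn H A) : IsRegPt ρ H h := by
  refine ⟨(faceIn_subset_inter_closure hh).1, fun K hK hhK => ?_⟩
  -- Otherwise some `z ∈ H \ K` gives points `h ± t z` of `closure A` on opposite sides of `K`.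
  by_contra hHK
  obtain ⟨z, hzH, hzK⟩ := not_subset.1 hHK
  obtain ⟨n, -, rfl⟩ := Submodule.exists_eq_orthogonal_span_singleton hK.1
  rw [SetLike.mem_coe, Submodule.mem_orthogonal_singleton_iff_inner_right] at hzK
  rw [Submodule.mem_orthogonal_singleton_iff_inner_right] at hhK
  obtain ⟨t, ht, hplus, hminus⟩ := exists_pos_add_sub_smul_mem_closure_of_mem_faceIn hh hzH
  have := hA.isPreconnected.mul_nonneg_of_mem_closure (f := fun u => inner ℝ n u)
    (continuous_const.inner continuous_id)
    (fun _ => hA.inner_ne_zero hK) hplus hminus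
  simp only [inner_add_right, inner_sub_right, real_inner_smul_right, hhK] at this
  nlinarith [mul_pos ht ht, mul_self_pos.2 hzK]

theorem inner_neg_of_notMem_sepSet {A B : Set V} (hA : IsChamber ρ A) (hB : IsChamber ρ B)
    {n p q : V} (hn : (ℝ ∙ n)ᗮ ∈ mirrors ρ) (hnAB : (ℝ ∙ n)ᗮ ∉ sepSet ρ A B)
    (hp : p ∈ closure A) (hq : q ∈ closure B) (hpn : inner ℝ n p < 0) (hqn : q ∉ (ℝ ∙ n)ᗮ) :
    inner ℝ n q < 0 := by
  have hpn' : p ∉ (ℝ ∙ n)ᗮ := by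
    rw [Submodule.mem_orthogonal_singleton_iff_inner_right]
    exact hpn.ne
  rw [mem_sepSet_iff_mul_inner_neg hA hB hn hp hq hpn' hqn, not_lt] at hnAB
  rw [Submodule.mem_orthogonal_singleton_iff_inner_right] at hqn
  exact (nonpos_of_mul_nonneg_right hnAB hpn).lt_of_ne hqn

theorem sepSet_subset_insert_insert {A A' : Set V} (hA : IsChamber ρ A) (hA' : IsChamber ρ A')
    {H : Submodule ℝ V} (hH : H ∈ mirrors ρ) {h : V} (hh : h ∈ faceIn H A)
    (hhA' : h ∈ closure A') (y : Wtilde δ) :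
    sepSet ρ A' (ρ y '' A') ⊆
      insert H (insert (H.map ((ρ y).toLinearEquiv : V →ₗ[ℝ] V)) (sepSet ρ A (ρ y '' A))) := by
  have hreg := hA.isRegPt_of_mem_faceIn hh
  have hclosure : ∀ {S : Set V}, h ∈ closure S → ρ y h ∈ closure (ρ y '' S) :=
    mem_closure_image (ρ y).continuous.continuousAt
  intro K hK
  by_cases hKH : K = H
  · exact .inl hKH
  by_cases hKHy : K = H.map ((ρ y).toLinearEquiv : V →ₗ[ℝ] V)
  · exact .inr (.inl hKHy)
  exact .inr <| .inr <| mem_sepSet_of_mem_sepSet hA hA' (hA.image y) (hA'.image y)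
    (faceIn_subset_inter_closure hh).2 hhA' (hclosure (faceIn_subset_inter_closure hh).2)
    (hclosure hhA') hK (hreg.notMem hH hK.1 hKH)
    ((hreg.map y).notMem (map_mem_mirrors ρ hH y) hK.1 hKHy)

theorem inner_neg_of_ncard_sepSet_eq_add_two [Finite W] {A A' : Set V} (hA : IsChamber ρ A)
    (hA' : IsChamber ρ A') {v h a : V} (hv : (ℝ ∙ v)ᗮ ∈ mirrors ρ) (hh : h ∈ faceIn (ℝ ∙ v)ᗮ A)
    (hhA' : h ∈ closure A') (ha : a ∈ A) (hva : inner ℝ v a < 0) (y : Wtilde δ)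
    (hcard : (sepSet ρ A' (ρ y '' A')).ncard = (sepSet ρ A (ρ y '' A)).ncard + 2) :
    inner ℝ v (ρ y h) < 0 ∧ inner ℝ (ρ y v) h < 0 := by
  obtain ⟨hHS, hHyS⟩ := Set.notMem_insert_insert_of_ncard_eq
    ((mirrors_finite ρ).subset fun _ hK => hK.1) (sepSet_subset_insert_insert hA hA' hv hh hhA' y)
    hcard
  rw [mem_insert_iff, not_or] at hHS
  have hreg := hA.isRegPt_of_mem_faceIn hh
  have hHy := map_mem_mirrors ρ hv y
  have hyh : ρ y h ∉ (ℝ ∙ v)ᗮ := (hreg.map y).notMem hHy hv hHS.1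
  have hhy := hreg.notMem hv hHy (Ne.symm hHS.1)
  rw [sepSet_comm] at hHyS
  rw [LinearIsometryEquiv.map_orthogonal_span_singleton] at hHy hHyS hhy
  have hhA := (faceIn_subset_inter_closure hh).2
  exact ⟨inner_neg_of_notMem_sepSet hA (hA.image y) hv hHS.2 (subset_closure ha)
      (mem_closure_image (ρ y).continuous.continuousAt hhA) hva hyh,
    inner_neg_of_notMem_sepSet (hA.image y) hA hHy hHyS (subset_closure (mem_image_of_mem _ ha))
      hhA (by rwa [LinearIsometryEquiv.inner_map_map]) hhy⟩

end Chambers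

section Derivative

variable {V : Type*} [NormedAddCommGroup V] [InnerProductSpace ℝ V]

theorem hasDerivAt_norm_apply_sub_self_sq {F : Type*} [FunLike F V V] [LinearMapClass F ℝ V V]
    (e : F) (h v : V) :
    HasDerivAt (fun t : ℝ => ‖e (h + t • v) - (h + t • v)‖ ^ 2)
      (2 * inner ℝ (e h - h) (e v - v)) 0 := by
  have hline : HasDerivAt (fun t : ℝ => (e h - h) + t • (e v - v)) (e v - v) 0 := by
    simpa using ((hasDerivAt_id (0 : ℝ)).smul_const (e v - v)).const_add (e h - h)
  convert hline.norm_sq using 1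
  · ext t
    rw [map_add, map_smul, smul_sub]
    abel_nf
  · simp

theorem LinearIsometryEquiv.deriv_norm_apply_sub_self_sq (e : V ≃ₗᵢ[ℝ] V) {h v : V}
    (hhv : inner ℝ h v = 0) :
    deriv (fun t : ℝ => ‖e (h + t • v) - (h + t • v)‖ ^ 2) 0 =
      -2 * (inner ℝ v (e h) + inner ℝ (e v) h) := by
  rw [(hasDerivAt_norm_apply_sub_self_sq e h v).deriv]
  simp only [inner_sub_left, inner_sub_right, e.inner_map_map, hhv, real_inner_comm v (e h),
    real_inner_comm (e v) h]
  ring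

end Derivative

open SemidirectProduct in
theorem stmt_4_general {B W : Type*} [Group W] [Finite W] {M : CoxeterMatrix B}
    (cs : CoxeterSystem M W) (δ : MulAut W)
    {V : Type*} [NormedAddCommGroup V] [InnerProductSpace ℝ V] [FiniteDimensional ℝ V]
    (ρ : Wtilde δ →* (V ≃ₗᵢ[ℝ] V))
    (C : Set V)
    -- `ℓ(w̃_A) = #𝔥(A, w̃(A))` for every chamber `A = z(C)` (part of the context)
    (hlen : ∀ (z : W) (x : Wtilde δ),
      tlen cs ((inl z)⁻¹ * x * inl z) =
        (sepSet ρ (ρ (inl z) '' C) (ρ x '' (ρ (inl z) '' C))).ncard)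
    -- the element `w̃` and the chambers `A`, `A'` with `A = x_A(C)`, `A' = x_{A'}(C)`
    (x : Wtilde δ) (A A' : Set V) (hA : IsChamber ρ A) (hA' : IsChamber ρ A')
    (xA xA' : W) (hxA : ρ (inl xA) '' C = A) (hxA' : ρ (inl xA') '' C = A')
    -- `H ∈ 𝔥` is a common wall of `A` and `A'`, with common face `H_A = H_{A'}`
    (H : Submodule ℝ V) (hH : H ∈ mirrors ρ)
    (hface : faceIn H A = faceIn H A')
    -- `h` is a point of the common face and `v ∈ H^⊥` points away from `A`
    (h : V) (hh : h ∈ faceIn H A)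
    (v : V) (hv : v ∈ Hᗮ)
    (hvA : ∃ ε₀ > (0:ℝ), ∀ ε : ℝ, 0 < ε → ε < ε₀ → h - ε • v ∈ A)
    -- the length assumption `ℓ(w̃_{A'}) = ℓ(w̃_A) + 2`
    (hlen2 : tlen cs ((inl xA')⁻¹ * x * inl xA') = tlen cs ((inl xA)⁻¹ * x * inl xA) + 2) :
    0 < deriv (fun t : ℝ => ‖ρ x (h + t • v) - (h + t • v)‖ ^ 2) 0 := by
  obtain ⟨hhH, -⟩ := faceIn_subset_inter_closure hh
  obtain ⟨ε, hε, hεA⟩ := hvA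
  have ha : h - (ε / 2) • v ∈ A := hεA _ (by positivity) (by linarith)
  have hv0 : v ≠ 0 := by
    rintro rfl
    exact hA.subset_chamberDom (by simpa using ha) H hH hhH
  have hva : inner ℝ v (h - (ε / 2) • v) < 0 := by
    rw [inner_sub_right, real_inner_smul_right, Submodule.inner_left_of_mem_orthogonal hhH hv,
      real_inner_self_eq_norm_sq]
    have : 0 < ε / 2 * ‖v‖ ^ 2 := by positivity
    linarith
  have hcard : (sepSet ρ A' (ρ x '' A')).ncard = (sepSet ρ A (ρ x '' A)).ncard + 2 := by
    rw [← hxA, ← hxA', ← hlen, ← hlen, hlen2]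
  have hhA' := (faceIn_subset_inter_closure (hface ▸ hh)).2
  obtain rfl := Submodule.eq_orthogonal_span_singleton hH.1 hv hv0
  obtain ⟨h₁, h₂⟩ := inner_neg_of_ncard_sepSet_eq_add_two hA hA' hH hh hhA' ha hva x hcard
  rw [(ρ x).deriv_norm_apply_sub_self_sq (Submodule.inner_right_of_mem_orthogonal hhH hv)]
  linarith

open SemidirectProduct in
/-- if `A, A'` are distinct Weyl chambers with a common face contained in the
hyperplane `H ∈ 𝔥`, `h` is a point of the common face, `v ∈ H^⊥` points out of `A` at `h`,
and `ℓ(w̃_{A'}) = ℓ(w̃_A) + 2`, then the directional derivative of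
`f_{w̃}(u) = ‖w̃ u − u‖²` at `h` in the direction `v` is strictly positive. -/
theorem stmt_4 {B W : Type*} [Group W] [Finite W] {M : CoxeterMatrix B}
    (cs : CoxeterSystem M W) (δ : MulAut W)
    (hδ : (δ : W ≃* W) '' (Set.range cs.simple) = Set.range cs.simple)
    {V : Type*} [NormedAddCommGroup V] [InnerProductSpace ℝ V] [FiniteDimensional ℝ V]
    (ρ : Wtilde δ →* (V ≃ₗᵢ[ℝ] V)) (hρ : Function.Injective ρ)
    (hrefl : ∀ i : B, ∃ H : Submodule ℝ V, Module.finrank ℝ H + 1 = Module.finrank ℝ V ∧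
      ρ (inl (cs.simple i)) = H.reflection)
    (C : Set V) (hC : IsChamber ρ C)
    -- `ℓ(w̃_A) = #𝔥(A, w̃(A))` for every chamber `A = z(C)` (part of the context)
    (hlen : ∀ (z : W) (x : Wtilde δ),
      tlen cs ((inl z)⁻¹ * x * inl z) =
        (sepSet ρ (ρ (inl z) '' C) (ρ x '' (ρ (inl z) '' C))).ncard)
    -- the element `w̃` and the chambers `A`, `A'` with `A = x_A(C)`, `A' = x_{A'}(C)`
    (x : Wtilde δ) (A A' : Set V) (hA : IsChamber ρ A) (hA' : IsChamber ρ A')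
    (hAA' : A ≠ A')
    (xA xA' : W) (hxA : ρ (inl xA) '' C = A) (hxA' : ρ (inl xA') '' C = A')
    -- `H ∈ 𝔥` is a common wall of `A` and `A'`, with common face `H_A = H_{A'}`
    (H : Submodule ℝ V) (hH : H ∈ mirrors ρ)
    (hwallA : Submodule.span ℝ (faceIn H A) = H)
    (hwallA' : Submodule.span ℝ (faceIn H A') = H)
    (hface : faceIn H A = faceIn H A')
    -- `h` is a point of the common face and `v ∈ H^⊥` points away from `A`
    (h : V) (hh : h ∈ faceIn H A)
    (v : V) (hv : v ∈ Hᗮ)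
    (hvA : ∃ ε₀ > (0:ℝ), ∀ ε : ℝ, 0 < ε → ε < ε₀ → h - ε • v ∈ A)
    -- the length assumption `ℓ(w̃_{A'}) = ℓ(w̃_A) + 2`
    (hlen2 : tlen cs ((inl xA')⁻¹ * x * inl xA') = tlen cs ((inl xA)⁻¹ * x * inl xA) + 2) :
    0 < deriv (fun t : ℝ => ‖ρ x (h + t • v) - (h + t • v)‖ ^ 2) 0 :=
  stmt_4_general cs δ ρ C hlen x A A' hA hA' xA xA' hxA hxA' H hH hface h hh v hv hvA hlen2
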